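/- arXiv:1308.1327 — 3 statements merged into one kernel-verified Lean document; each statement's English description precedes it below -/
import Mathlib

section
/- Let u : [0,∞) → ℝ be absolutely continuous with |u(t)| ≤ M e^{λ₀ t} and |u′(t)| ≤ M e^{λ₀ t} almost everywhere, for some M, λ₀ > 0. Then for every real λ > λ₀, ∫₀^∞ e^{−λt} [ b u′(t) + ∫₀^t u′(t−s) ν(s) ds ] dt = f(λ) · ∫₀^∞ e^{−λt} u(t) dt − (f(λ)/λ) · u(0). -/
/-!
Write `L g = ∫₀^∞ e^{-λt} g(t) dt`. The function `e^{-λt} ∫₀^t u'(t-s) ν(s) ds` is the convolution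
on `ℝ` of `e^{-λ·}u'` and `e^{-λ·}ν`, both cut off to `(0,∞)`, so its integral is `L u' · L ν`.
Convolving `u'` with `1` instead gives `u - u(0)`, whence `L u' = λ L u - u(0)`. Finally
`λ L ν = a + ∫ (1 - e^{-λs}) ν̄(ds)` by the layer cake formula for `ν̄` with density `e^{-λt}`,
so `b + L ν = f(λ)/λ`.
-/

open MeasureTheory Set Real
open scoped ENNReal Convolution

noncomputable def laplace (g : ℝ → ℝ) (l : ℝ) : ℝ :=
  ∫ t in Ioi 0, exp (-(l * t)) * g t

def LaplaceIntegrable (g : ℝ → ℝ) (l : ℝ) : Prop :=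
  IntegrableOn (fun t => exp (-(l * t)) * g t) (Ioi 0)

section Exponential

variable {l : ℝ}

lemma integrableOn_exp_neg_mul (hl : 0 < l) (c : ℝ) :
    IntegrableOn (fun t => exp (-(l * t))) (Ioi c) := by
  simpa only [neg_mul] using exp_neg_integrableOn_Ioi c hl

lemma integral_exp_neg_mul_Ioi (hl : 0 < l) (c : ℝ) :
    ∫ t in Ioi c, exp (-(l * t)) = exp (-(l * c)) / l := by
  simpa only [neg_mul, neg_div_neg_eq] using integral_exp_mul_Ioi (neg_lt_zero.2 hl) c

lemma intervalIntegral_exp_neg_mul (hl : l ≠ 0) (s : ℝ) :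
    ∫ t in (0)..s, exp (-(l * t)) = (1 - exp (-(l * s))) / l := by
  have h := intervalIntegral.integral_comp_mul_left (fun x => exp x) (neg_ne_zero.2 hl)
    (a := 0) (b := s)
  simp only [neg_mul] at h
  rw [h, integral_exp, smul_eq_mul, mul_zero, neg_zero, exp_zero]
  field_simp
  ring

lemma one_sub_exp_neg_mul_div_le (hl : 0 < l) {s : ℝ} (hs : 0 ≤ s) :
    (1 - exp (-(l * s))) / l ≤ max 1 l⁻¹ * min s 1 := by
  have hlin : 1 - exp (-(l * s)) ≤ l * s := by linarith [add_one_le_exp (-(l * s))]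
  rcases le_total s 1 with h | h
  · calc (1 - exp (-(l * s))) / l ≤ s := by rw [div_le_iff₀ hl, mul_comm s]; exact hlin
      _ ≤ max 1 l⁻¹ * min s 1 := by
          rw [min_eq_left h]; exact le_mul_of_one_le_left hs (le_max_left _ _)
  · calc (1 - exp (-(l * s))) / l ≤ l⁻¹ := by
          rw [div_eq_mul_inv]
          exact mul_le_of_le_one_left (inv_pos.2 hl).le (by linarith [exp_pos (-(l * s))])
      _ ≤ max 1 l⁻¹ * min s 1 := by rw [min_eq_right h, mul_one]; exact le_max_right _ _

end Exponential

namespace LaplaceIntegrable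

variable {g k : ℝ → ℝ} {l : ℝ}

lemma congr (hg : LaplaceIntegrable g l) (h : EqOn g k (Ioi 0)) : LaplaceIntegrable k l :=
  IntegrableOn.congr_fun hg (fun t ht => by simp only [h ht]) measurableSet_Ioi

lemma add (hg : LaplaceIntegrable g l) (hk : LaplaceIntegrable k l) :
    LaplaceIntegrable (fun t => g t + k t) l := by
  unfold LaplaceIntegrable at *
  simp only [mul_add]
  exact Integrable.add hg hk

lemma const_mul (hg : LaplaceIntegrable g l) (c : ℝ) :
    LaplaceIntegrable (fun t => c * g t) l := by
  unfold LaplaceIntegrable at *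
  simp only [mul_left_comm _ c]
  exact Integrable.const_mul hg c

end LaplaceIntegrable

section LaplaceAlgebra

variable {g k : ℝ → ℝ} {l : ℝ}

lemma laplace_congr (h : EqOn g k (Ioi 0)) : laplace g l = laplace k l :=
  setIntegral_congr_fun measurableSet_Ioi fun t ht => by simp only [h ht]

lemma laplace_add (hg : LaplaceIntegrable g l) (hk : LaplaceIntegrable k l) :
    laplace (fun t => g t + k t) l = laplace g l + laplace k l := by
  simp only [laplace, mul_add]
  exact integral_add hg hk

lemma laplace_const_mul (c : ℝ) : laplace (fun t => c * g t) l = c * laplace g l := by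
  simp only [laplace, mul_left_comm _ c]
  exact integral_const_mul c _

lemma laplaceIntegrable_const (hl : 0 < l) (c : ℝ) : LaplaceIntegrable (fun _ => c) l :=
  (integrableOn_exp_neg_mul hl 0).mul_const c

lemma laplace_const (hl : 0 < l) (c : ℝ) : laplace (fun _ => c) l = c / l := by
  rw [laplace, integral_mul_const, integral_exp_neg_mul_Ioi hl, mul_zero, neg_zero, exp_zero]
  ring

end LaplaceAlgebra

section Convolution

variable {g k : ℝ → ℝ} {l : ℝ}

lemma indicator_convolution_eq :
    (Ioi 0).indicator (fun t => exp (-(l * t)) * k t) ⋆[ContinuousLinearMap.mul ℝ ℝ]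
        (Ioi 0).indicator (fun t => exp (-(l * t)) * g t) =
      (Ioi 0).indicator (fun t => exp (-(l * t)) * ∫ s in (0)..t, g (t - s) * k s) := by
  have hprod : ∀ t s, (Ioi 0).indicator (fun t => exp (-(l * t)) * k t) s *
        (Ioi 0).indicator (fun t => exp (-(l * t)) * g t) (t - s) =
      (Ioo 0 t).indicator (fun s => exp (-(l * t)) * (g (t - s) * k s)) s := by
    intro t s
    by_cases hs : 0 < s <;> by_cases hts : s < t <;>
      simp only [indicator, mem_Ioi, mem_Ioo, hs, hts, sub_pos, ↓reduceIte, mul_zero, zero_mul,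
        and_self, and_false, and_true]
    rw [show -(l * t) = -(l * s) + -(l * (t - s)) by ring, exp_add]
    ring
  ext t
  simp only [convolution_def, ContinuousLinearMap.mul_apply', hprod]
  rw [integral_indicator measurableSet_Ioo, integral_const_mul]
  rcases le_or_gt t 0 with ht | ht
  · simp [ht]
  · rw [indicator_of_mem (mem_Ioi.2 ht), intervalIntegral.integral_of_le ht.le,
      integral_Ioc_eq_integral_Ioo]

lemma LaplaceIntegrable.intervalIntegral_mul_sub (hg : LaplaceIntegrable g l)
    (hk : LaplaceIntegrable k l) :
    LaplaceIntegrable (fun t => ∫ s in (0)..t, g (t - s) * k s) l := by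
  have h := ((integrable_indicator_iff measurableSet_Ioi).2 hk).integrable_convolution
    (ContinuousLinearMap.mul ℝ ℝ) ((integrable_indicator_iff measurableSet_Ioi).2 hg)
  rwa [indicator_convolution_eq, integrable_indicator_iff measurableSet_Ioi] at h

lemma laplace_intervalIntegral_mul_sub (hg : LaplaceIntegrable g l)
    (hk : LaplaceIntegrable k l) :
    laplace (fun t => ∫ s in (0)..t, g (t - s) * k s) l = laplace g l * laplace k l := by
  have h := integral_convolution (ContinuousLinearMap.mul ℝ ℝ)
    ((integrable_indicator_iff measurableSet_Ioi).2 hk)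
    ((integrable_indicator_iff measurableSet_Ioi).2 hg)
  simp only [indicator_convolution_eq, integral_indicator measurableSet_Ioi,
    ContinuousLinearMap.mul_apply'] at h
  rw [laplace, laplace, laplace, h, mul_comm]

lemma laplace_of_eq_add_intervalIntegral {u : ℝ → ℝ} (hl : 0 < l) (hg : LaplaceIntegrable g l)
    (hu : ∀ x, 0 ≤ x → u x = u 0 + ∫ y in (0)..x, g y) :
    laplace g l = l * laplace u l - u 0 := by
  have hprim : EqOn (fun t => ∫ s in (0)..t, g (t - s) * 1) (fun t => u t - u 0) (Ioi 0) := by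
    intro t ht
    simp only [mul_one, intervalIntegral.integral_comp_sub_left (fun s => g s), sub_self,
      sub_zero]
    rw [hu t (le_of_lt ht)]
    ring
  have hconv := laplace_intervalIntegral_mul_sub hg (laplaceIntegrable_const hl 1)
  have hint := (hg.intervalIntegral_mul_sub (laplaceIntegrable_const hl 1)).congr hprim
  rw [laplace_congr hprim, laplace_const hl] at hconv
  have hsplit : laplace u l = laplace (fun t => u t - u 0) l + u 0 / l := by
    rw [← laplace_const hl, ← laplace_add hint (laplaceIntegrable_const hl _)]
    simp only [sub_add_cancel]
  rw [hsplit, hconv]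
  field_simp
  ring

end Convolution

section LevyTail

variable {nb : Measure ℝ} {l : ℝ}

lemma measure_Ioi_ne_top (hint : ∫⁻ s in Ioi (0 : ℝ), ENNReal.ofReal (min s 1) ∂nb ≠ ⊤)
    {ε : ℝ} (hε : 0 < ε) : nb (Ioi ε) ≠ ⊤ := by
  have hle : ENNReal.ofReal (min ε 1) * nb (Ioi ε) ≤
      ∫⁻ s in Ioi (0 : ℝ), ENNReal.ofReal (min s 1) ∂nb :=
    calc ENNReal.ofReal (min ε 1) * nb (Ioi ε) = ∫⁻ _ in Ioi ε, ENNReal.ofReal (min ε 1) ∂nb :=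
          (setLIntegral_const _ _).symm
      _ ≤ ∫⁻ s in Ioi ε, ENNReal.ofReal (min s 1) ∂nb :=
          setLIntegral_mono' measurableSet_Ioi fun s hs =>
            ENNReal.ofReal_le_ofReal (min_le_min_right _ (le_of_lt hs))
      _ ≤ ∫⁻ s in Ioi (0 : ℝ), ENNReal.ofReal (min s 1) ∂nb :=
          lintegral_mono_set (Ioi_subset_Ioi hε.le)
  exact (ENNReal.lt_top_of_mul_ne_top_right (ne_top_of_le_ne_top hint hle) (by simp [hε])).ne

lemma lintegral_one_sub_exp_neg_mul_ne_top
    (hint : ∫⁻ s in Ioi (0 : ℝ), ENNReal.ofReal (min s 1) ∂nb ≠ ⊤) (hl : 0 < l) :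
    ∫⁻ s in Ioi 0, ENNReal.ofReal ((1 - exp (-(l * s))) / l) ∂nb ≠ ⊤ := by
  refine ne_top_of_le_ne_top
    (ENNReal.mul_ne_top (ENNReal.ofReal_ne_top (r := max 1 l⁻¹)) hint) ?_
  rw [← lintegral_const_mul' _ _ ENNReal.ofReal_ne_top]
  refine setLIntegral_mono' measurableSet_Ioi fun s hs => ?_
  rw [← ENNReal.ofReal_mul (le_max_of_le_left zero_le_one)]
  exact ENNReal.ofReal_le_ofReal (one_sub_exp_neg_mul_div_le hl (le_of_lt hs))

lemma lintegral_measure_Ioi_mul_exp_neg_mul (hl : 0 < l) :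
    ∫⁻ t in Ioi 0, nb (Ioi t) * ENNReal.ofReal (exp (-(l * t))) =
      ∫⁻ s in Ioi 0, ENNReal.ofReal ((1 - exp (-(l * s))) / l) ∂nb := by
  have h := lintegral_comp_eq_lintegral_meas_lt_mul (nb.restrict (Ioi 0)) (f := id)
    (g := fun t => exp (-(l * t)))
    ((ae_restrict_iff' measurableSet_Ioi).2 (ae_of_all _ fun s hs => le_of_lt hs))
    aemeasurable_id (fun t _ => (continuous_exp.comp (by fun_prop)).intervalIntegrable _ _)
    (ae_of_all _ fun t => (exp_pos _).le)
  simp only [id, intervalIntegral_exp_neg_mul hl.ne'] at h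
  rw [h]
  refine setLIntegral_congr_fun measurableSet_Ioi fun t ht => ?_
  rw [Measure.restrict_apply' measurableSet_Ioi]
  change _ = nb (Ioi t ∩ Ioi 0) * _
  rw [inter_eq_left.2 (Ioi_subset_Ioi (le_of_lt ht))]

lemma lintegral_exp_neg_mul_toReal_measure_Ioi
    (hint : ∫⁻ s in Ioi (0 : ℝ), ENNReal.ofReal (min s 1) ∂nb ≠ ⊤) (hl : 0 < l) :
    ∫⁻ t in Ioi 0, ENNReal.ofReal (exp (-(l * t)) * (nb (Ioi t)).toReal) =
      ∫⁻ s in Ioi 0, ENNReal.ofReal ((1 - exp (-(l * s))) / l) ∂nb := by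
  rw [← lintegral_measure_Ioi_mul_exp_neg_mul hl]
  refine setLIntegral_congr_fun measurableSet_Ioi fun t ht => ?_
  rw [ENNReal.ofReal_mul (exp_pos _).le, ENNReal.ofReal_toReal (measure_Ioi_ne_top hint ht),
    mul_comm]

lemma measurable_toReal_measure_Ioi :
    Measurable fun t => (nb (Ioi t)).toReal :=
  (Antitone.measurable fun _ _ h => measure_mono (Ioi_subset_Ioi h)).ennreal_toReal

lemma laplaceIntegrable_toReal_measure_Ioi
    (hint : ∫⁻ s in Ioi (0 : ℝ), ENNReal.ofReal (min s 1) ∂nb ≠ ⊤) (hl : 0 < l) :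
    LaplaceIntegrable (fun t => (nb (Ioi t)).toReal) l := by
  refine ⟨(by fun_prop : Continuous fun t => exp (-(l * t))).aestronglyMeasurable.mul
    measurable_toReal_measure_Ioi.aestronglyMeasurable, ?_⟩
  rw [hasFiniteIntegral_iff_ofReal
      (ae_of_all _ fun t => mul_nonneg (exp_pos _).le ENNReal.toReal_nonneg),
    lintegral_exp_neg_mul_toReal_measure_Ioi hint hl]
  exact (lintegral_one_sub_exp_neg_mul_ne_top hint hl).lt_top

lemma laplace_toReal_measure_Ioi
    (hint : ∫⁻ s in Ioi (0 : ℝ), ENNReal.ofReal (min s 1) ∂nb ≠ ⊤) (hl : 0 < l) :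
    laplace (fun t => (nb (Ioi t)).toReal) l = (∫ s in Ioi 0, (1 - exp (-(l * s))) ∂nb) / l := by
  rw [laplace, integral_eq_lintegral_of_nonneg_ae
      (ae_of_all _ fun t => mul_nonneg (exp_pos _).le ENNReal.toReal_nonneg)
      (laplaceIntegrable_toReal_measure_Ioi hint hl).aestronglyMeasurable,
    lintegral_exp_neg_mul_toReal_measure_Ioi hint hl,
    ← integral_eq_lintegral_of_nonneg_ae, integral_div]
  · exact (ae_restrict_iff' measurableSet_Ioi).2 (ae_of_all _ fun s hs =>
      div_nonneg (sub_nonneg.2 (exp_le_one_iff.2 (by nlinarith [mem_Ioi.1 hs]))) hl.le)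
  · exact (by fun_prop : Continuous fun s => (1 - exp (-(l * s))) / l).aestronglyMeasurable

end LevyTail

lemma aestronglyMeasurable_restrict_Ioi_of_integrableOn_Icc {E : Type*} [NormedAddCommGroup E]
    {g : ℝ → E} {a : ℝ} (h : ∀ d, a < d → IntegrableOn g (Icc a d)) :
    AEStronglyMeasurable g (volume.restrict (Ioi a)) := by
  have hU : AEStronglyMeasurable g (volume.restrict (⋃ n : ℕ, Icc a (a + n + 1))) :=
    aestronglyMeasurable_iUnion_iff.2 fun n => (h _ (by linarith [n.cast_nonneg (α := ℝ)])).1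
  refine hU.mono_measure (Measure.restrict_mono (fun x hx => ?_) le_rfl)
  obtain ⟨n, hn⟩ := exists_nat_gt (x - a)
  exact mem_iUnion.2 ⟨n, le_of_lt hx, by linarith⟩

lemma laplaceIntegrable_of_abs_le {g : ℝ → ℝ} {l M lam0 : ℝ} (hl : lam0 < l)
    (hm : AEStronglyMeasurable g (volume.restrict (Ioi 0)))
    (hb : ∀ᵐ t ∂(volume.restrict (Ioi 0)), |g t| ≤ M * exp (lam0 * t)) :
    LaplaceIntegrable g l := by
  refine Integrable.mono' ((integrableOn_exp_neg_mul (sub_pos.2 hl) 0).const_mul M)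
    ((by fun_prop : Continuous fun t => exp (-(l * t))).aestronglyMeasurable.mul hm) ?_
  filter_upwards [hb] with t ht
  calc ‖exp (-(l * t)) * g t‖ = exp (-(l * t)) * |g t| := by
        rw [norm_mul, norm_of_nonneg (exp_pos _).le, norm_eq_abs]
    _ ≤ exp (-(l * t)) * (M * exp (lam0 * t)) := mul_le_mul_of_nonneg_left ht (exp_pos _).le
    _ = M * exp (-((l - lam0) * t)) := by
        rw [mul_left_comm, ← exp_add]
        ring_nf

theorem laplace_generalized_caputo_general
    (a b : ℝ)
    (nb : Measure ℝ)
    (hint : ∫⁻ s in Set.Ioi (0 : ℝ), ENNReal.ofReal (min s 1) ∂nb ≠ ⊤)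
    (f nt : ℝ → ℝ)
    (hf : ∀ l : ℝ, 0 < l →
      f l = a + b * l + ∫ s in Set.Ioi (0 : ℝ), (1 - Real.exp (-(l * s))) ∂nb)
    (hnt : ∀ s : ℝ, 0 < s → nt s = a + (nb (Set.Ioi s)).toReal)
    (u u' : ℝ → ℝ) (M lam0 : ℝ) (hlam0 : 0 < lam0)
    -- `u` is absolutely continuous on `[0,∞)` with derivative `u'`
    (hu'int : ∀ d : ℝ, 0 < d → IntegrableOn u' (Set.Icc 0 d))
    (huAC : ∀ x : ℝ, 0 ≤ x → u x = u 0 + ∫ y in (0 : ℝ)..x, u' y)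
    (hu'b : ∀ᵐ t ∂(volume.restrict (Set.Ioi (0 : ℝ))), |u' t| ≤ M * Real.exp (lam0 * t)) :
    ∀ l : ℝ, lam0 < l →
      ∫ t in Set.Ioi (0 : ℝ),
          Real.exp (-(l * t)) * (b * u' t + ∫ s in (0 : ℝ)..t, u' (t - s) * nt s)
        = f l * (∫ t in Set.Ioi (0 : ℝ), Real.exp (-(l * t)) * u t) - (f l / l) * u 0 := by
  intro l hl
  have hl0 : 0 < l := hlam0.trans hl
  have hu' : LaplaceIntegrable u' l := laplaceIntegrable_of_abs_le hl
    (aestronglyMeasurable_restrict_Ioi_of_integrableOn_Icc hu'int) hu'b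
  have hnt_eq : EqOn (fun s => a + (nb (Ioi s)).toReal) nt (Ioi 0) := fun s hs => (hnt s hs).symm
  have hnt' : LaplaceIntegrable nt l :=
    ((laplaceIntegrable_const hl0 a).add (laplaceIntegrable_toReal_measure_Ioi hint hl0)).congr
      hnt_eq
  have hlaplace_nt : laplace nt l = (f l - b * l) / l := by
    rw [← laplace_congr hnt_eq, laplace_add (laplaceIntegrable_const hl0 a)
      (laplaceIntegrable_toReal_measure_Ioi hint hl0), laplace_const hl0,
      laplace_toReal_measure_Ioi hint hl0, hf l hl0]
    ring
  change laplace (fun t => b * u' t + ∫ s in (0 : ℝ)..t, u' (t - s) * nt s) l =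
    f l * laplace u l - f l / l * u 0
  rw [laplace_add (hu'.const_mul b) (hu'.intervalIntegral_mul_sub hnt'), laplace_const_mul,
    laplace_intervalIntegral_mul_sub hu' hnt', hlaplace_nt,
    laplace_of_eq_add_intervalIntegral hl0 hu' huAC]
  field_simp
  ring

/-- Laplace transform of the generalized Dzerbayshan–Caputo derivative
`u ↦ b u′(t) + ∫₀^t u′(t−s) ν(s) ds` associated with the Bernstein function
`f(λ) = a + bλ + ∫₀^∞ (1 − e^{−λs}) ν̄(ds)` with Lévy tail `ν(s) = a + ν̄((s,∞))`:
for every real `λ > λ₀`,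
`∫₀^∞ e^{−λt} [ b u′(t) + ∫₀^t u′(t−s) ν(s) ds ] dt
  = f(λ) ∫₀^∞ e^{−λt} u(t) dt − (f(λ)/λ) u(0)`. -/
theorem laplace_generalized_caputo
    (a b : ℝ) (ha : 0 ≤ a) (hb : 0 ≤ b)
    (nb : Measure ℝ)
    (hint : ∫⁻ s in Set.Ioi (0 : ℝ), ENNReal.ofReal (min s 1) ∂nb ≠ ⊤)
    (f nt : ℝ → ℝ)
    (hf : ∀ l : ℝ, 0 < l →
      f l = a + b * l + ∫ s in Set.Ioi (0 : ℝ), (1 - Real.exp (-(l * s))) ∂nb)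
    (hnt : ∀ s : ℝ, 0 < s → nt s = a + (nb (Set.Ioi s)).toReal)
    (u u' : ℝ → ℝ) (M lam0 : ℝ) (hM : 0 < M) (hlam0 : 0 < lam0)
    -- `u` is absolutely continuous on `[0,∞)` with derivative `u'`
    (hu'int : ∀ d : ℝ, 0 < d → IntegrableOn u' (Set.Icc 0 d))
    (huAC : ∀ x : ℝ, 0 ≤ x → u x = u 0 + ∫ y in (0 : ℝ)..x, u' y)
    (hub : ∀ t : ℝ, 0 ≤ t → |u t| ≤ M * Real.exp (lam0 * t))
    (hu'b : ∀ᵐ t ∂(volume.restrict (Set.Ioi (0 : ℝ))), |u' t| ≤ M * Real.exp (lam0 * t)) :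
    ∀ l : ℝ, lam0 < l →
      ∫ t in Set.Ioi (0 : ℝ),
          Real.exp (-(l * t)) * (b * u' t + ∫ s in (0 : ℝ)..t, u' (t - s) * nt s)
        = f l * (∫ t in Set.Ioi (0 : ℝ), Real.exp (-(l * t)) * u t) - (f l / l) * u 0 :=
  laplace_generalized_caputo_general a b nb hint f nt hf hnt u u' M lam0 hlam0 hu'int huAC hu'b
end

section
/- Let 0 < c ≤ d < ∞, let u be absolutely continuous on [c,d], and assume s ↦ ν(s) is absolutely continuous on (0,∞). Then the function t ↦ b u(t) + ∫₀^{t−c} u(t−s) ν(s) ds is differentiable almost everywhere on [c,d] and, for almost every t ∈ [c,d], (d/dt)[ b u(t) + ∫₀^{t−c} u(t−s) ν(s) ds ] = b u′(t) + ∫₀^{t−c} u′(t−s) ν(s) ds + ν(t−c) u(c). -/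
/-!
Writing `u (t - s) = u c + ∫_c^{t-s} u'`, the Riemann–Liouville integral `∫_0^{t-c} u(t-s) ν(s) ds`
splits into `u c * ∫_0^{t-c} ν` and `∫_0^{t-c} (∫_c^{t-s} u') ν(s) ds`. Fubini on the triangle
`0 < s ≤ r - c ≤ t - c` turns the latter into `∫_c^t (∫_0^{r-c} u'(r-s) ν(s) ds) dr`. Hence
`t ↦ b u(t) + ∫_0^{t-c} u(t-s) ν(s) ds` is, on `[c, d]`, a primitive of
`b u' + ∫_0^{· - c} u'(· - s) ν(s) ds + ν(· - c) u(c)`. This function is integrable because a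
Lévy tail is integrable near `0` (layer cake: `∫_0^X ν̄((x,∞)) dx ≤ max X 1 * ∫ min(s,1) ν̄(ds)`), and
Lebesgue's differentiation theorem gives the derivative almost everywhere.
-/

open MeasureTheory Set Real
open scoped ENNReal

theorem setLIntegral_Ioc_measure_Ioi_lt_top (nb : Measure ℝ)
    (hint : ∫⁻ s in Ioi (0 : ℝ), ENNReal.ofReal (min s 1) ∂nb ≠ ⊤) (X : ℝ) :
    ∫⁻ x in Ioc 0 X, nb (Ioi x) < ∞ := by
  rcases le_or_gt X 0 with hX | hX
  · simp [Ioc_eq_empty_of_le hX]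
  set ν := nb.restrict (Ioi 0)
  have hmin : ∀ y ∈ Ioi (0 : ℝ), ENNReal.ofReal (min y X) ≤
      ENNReal.ofReal (max X 1) * ENNReal.ofReal (min y 1) := by
    intro y hy
    rw [← ENNReal.ofReal_mul (by positivity)]
    refine ENNReal.ofReal_le_ofReal ?_
    rcases le_total y 1 with hy1 | hy1
    · rw [min_eq_left hy1]
      nlinarith [min_le_left y X, le_max_right X 1, mem_Ioi.1 hy]
    · rw [min_eq_right hy1, mul_one]
      exact (min_le_right y X).trans (le_max_left X 1)
  calc ∫⁻ x in Ioc 0 X, nb (Ioi x)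
      ≤ ∫⁻ x in Ioi 0, ν {y | x ≤ min y X} := by
        refine (setLIntegral_mono' measurableSet_Ioc fun x hx => ?_).trans
          (lintegral_mono_set Ioc_subset_Ioi_self)
        rw [Measure.restrict_apply' measurableSet_Ioi]
        exact measure_mono fun y (hy : x < y) => ⟨le_min hy.le hx.2, hx.1.trans hy⟩
    _ = ∫⁻ y, ENNReal.ofReal (min y X) ∂ν :=
        (lintegral_eq_lintegral_meas_le ν
          ((ae_restrict_mem measurableSet_Ioi).mono fun y hy => le_min (le_of_lt hy) hX.le)
          (continuous_id.min continuous_const).measurable.aemeasurable).symm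
    _ ≤ ∫⁻ y, ENNReal.ofReal (max X 1) * ENNReal.ofReal (min y 1) ∂ν :=
        setLIntegral_mono' measurableSet_Ioi hmin
    _ < ⊤ := by
        rw [lintegral_const_mul' _ _ ENNReal.ofReal_ne_top]
        exact ENNReal.mul_lt_top ENNReal.ofReal_lt_top hint.lt_top

theorem integrableOn_levyTail (a : ℝ) (nb : Measure ℝ)
    (hint : ∫⁻ s in Ioi (0 : ℝ), ENNReal.ofReal (min s 1) ∂nb ≠ ⊤) (X : ℝ) :
    IntegrableOn (fun s => a + (nb (Ioi s)).toReal) (Ioc 0 X) := by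
  have hanti : Antitone fun x : ℝ => nb (Ioi x) := fun _ _ hxy => measure_mono (Ioi_subset_Ioi hxy)
  exact (integrableOn_const (by simp)).add
    (integrable_toReal_of_lintegral_ne_top hanti.measurable.aemeasurable
      (setLIntegral_Ioc_measure_Ioi_lt_top nb hint X).ne)

section CausalConvolution

variable {f g : ℝ → ℝ} {c t : ℝ}

/-- Restricting `f` to `[c, t]` cuts the rectangle `(c, t] × (0, t - c]` down to the triangle
`s ≤ r - c`. -/
theorem integrable_mul_indicator_comp_sub (hf : IntegrableOn f (Icc c t))
    (hg : IntegrableOn g (Ioc 0 (t - c))) :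
    Integrable (fun p : ℝ × ℝ => g p.2 * (Icc c t).indicator f (p.1 - p.2))
      ((volume.restrict (Ioc c t)).prod (volume.restrict (Ioc 0 (t - c)))) := by
  have h := Integrable.convolution_integrand (ContinuousLinearMap.mul ℝ ℝ) (μ := volume) hg
    (hf.integrable_indicator measurableSet_Icc)
  rw [← Measure.restrict_univ (μ := volume.restrict (Ioc 0 (t - c))), Measure.prod_restrict]
  exact h.restrict

theorem setIntegral_mul_indicator_comp_sub {r : ℝ} (hr : r ∈ Ioc c t) :
    ∫ s in Ioc 0 (t - c), g s * (Icc c t).indicator f (r - s) =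
      ∫ s in (0 : ℝ)..(r - c), f (r - s) * g s := by
  have hslice : EqOn (fun s => g s * (Icc c t).indicator f (r - s))
      ((Ioc 0 (r - c)).indicator fun s => f (r - s) * g s) (Ioc 0 (t - c)) := by
    intro s hs
    by_cases hsr : s ≤ r - c
    · have hrs : r - s ∈ Icc c t := ⟨by linarith, by linarith [hr.2, hs.1]⟩
      simp only [indicator_of_mem hrs, indicator_of_mem (show s ∈ Ioc 0 (r - c) from ⟨hs.1, hsr⟩)]
      ring
    · have hrs : r - s ∉ Icc c t := fun h => hsr (by linarith [h.1])
      have hs' : s ∉ Ioc 0 (r - c) := fun h => hsr h.2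
      simp only [indicator_of_notMem hrs, indicator_of_notMem hs', mul_zero]
  rw [setIntegral_congr_fun measurableSet_Ioc hslice, setIntegral_indicator measurableSet_Ioc,
    inter_eq_right.2 (Ioc_subset_Ioc_right (by linarith [hr.2])),
    intervalIntegral.integral_of_le (by linarith [hr.1])]

theorem setIntegral_indicator_comp_sub {s : ℝ} (hs : s ∈ Ioc 0 (t - c)) :
    ∫ r in Ioc c t, (Icc c t).indicator f (r - s) = ∫ x in c..(t - s), f x := by
  rw [← intervalIntegral.integral_of_le (by linarith [hs.1, hs.2]),
    intervalIntegral.integral_comp_sub_right,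
    intervalIntegral.integral_of_le (by linarith [hs.1, hs.2])]
  have hset : Ioc (c - s) (t - s) ∩ Icc c t = Icc c (t - s) := by
    ext x
    simp only [mem_inter_iff, mem_Ioc, mem_Icc]
    grind
  rw [setIntegral_indicator measurableSet_Icc, hset, integral_Icc_eq_integral_Ioc,
    intervalIntegral.integral_of_le (by linarith [hs.2])]

theorem intervalIntegrable_integral_mul_comp_sub (hct : c ≤ t) (hf : IntegrableOn f (Icc c t))
    (hg : IntegrableOn g (Ioc 0 (t - c))) :
    IntervalIntegrable (fun r => ∫ s in (0 : ℝ)..(r - c), f (r - s) * g s) volume c t := by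
  rw [intervalIntegrable_iff_integrableOn_Ioc_of_le hct]
  exact IntegrableOn.congr_fun (integrable_mul_indicator_comp_sub hf hg).integral_prod_left
    (fun r hr => setIntegral_mul_indicator_comp_sub hr) measurableSet_Ioc

theorem intervalIntegrable_integral_comp_sub_mul (hct : c ≤ t) (hf : IntegrableOn f (Icc c t))
    (hg : IntegrableOn g (Ioc 0 (t - c))) :
    IntervalIntegrable (fun s => (∫ x in c..(t - s), f x) * g s) volume 0 (t - c) := by
  rw [intervalIntegrable_iff_integrableOn_Ioc_of_le (by linarith)]
  refine IntegrableOn.congr_fun (integrable_mul_indicator_comp_sub hf hg).integral_prod_right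
    (fun s hs => ?_) measurableSet_Ioc
  simp only [integral_const_mul, setIntegral_indicator_comp_sub hs, mul_comm]

theorem integral_integral_mul_comp_sub (hct : c ≤ t) (hf : IntegrableOn f (Icc c t))
    (hg : IntegrableOn g (Ioc 0 (t - c))) :
    ∫ r in c..t, ∫ s in (0 : ℝ)..(r - c), f (r - s) * g s =
      ∫ s in (0 : ℝ)..(t - c), (∫ x in c..(t - s), f x) * g s := by
  rw [intervalIntegral.integral_of_le hct, intervalIntegral.integral_of_le (by linarith)]
  calc ∫ r in Ioc c t, ∫ s in (0 : ℝ)..(r - c), f (r - s) * g s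
      = ∫ r in Ioc c t, ∫ s in Ioc 0 (t - c), g s * (Icc c t).indicator f (r - s) :=
        setIntegral_congr_fun measurableSet_Ioc fun r hr =>
          (setIntegral_mul_indicator_comp_sub hr).symm
    _ = ∫ s in Ioc 0 (t - c), ∫ r in Ioc c t, g s * (Icc c t).indicator f (r - s) :=
        integral_integral_swap (integrable_mul_indicator_comp_sub hf hg)
    _ = ∫ s in Ioc 0 (t - c), (∫ x in c..(t - s), f x) * g s :=
        setIntegral_congr_fun measurableSet_Ioc fun s hs => by
          simp only [integral_const_mul, setIntegral_indicator_comp_sub hs, mul_comm]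

end CausalConvolution

section AbsolutelyContinuous

variable {u u' g : ℝ → ℝ} {c r : ℝ}

theorem intervalIntegrable_integral_mul_comp_sub_add (hcr : c ≤ r)
    (hu' : IntegrableOn u' (Icc c r)) (hg : IntegrableOn g (Ioc 0 (r - c))) (A : ℝ) :
    IntervalIntegrable (fun x => (∫ s in (0 : ℝ)..(x - c), u' (x - s) * g s) + g (x - c) * A)
      volume c r := by
  have hg' : IntervalIntegrable g volume 0 (r - c) :=
    (intervalIntegrable_iff_integrableOn_Ioc_of_le (by linarith)).2 hg
  refine (intervalIntegrable_integral_mul_comp_sub hcr hu' hg).add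
    (IntervalIntegrable.mul_const ?_ A)
  simpa using hg'.comp_sub_right c

theorem integral_mul_comp_sub_eq_integral (hcr : c ≤ r)
    (hu : ∀ x ∈ Icc c r, u x = u c + ∫ y in c..x, u' y) (hu' : IntegrableOn u' (Icc c r))
    (hg : IntegrableOn g (Ioc 0 (r - c))) :
    ∫ s in (0 : ℝ)..(r - c), u (r - s) * g s =
      ∫ x in c..r, ((∫ s in (0 : ℝ)..(x - c), u' (x - s) * g s) + g (x - c) * u c) := by
  have hg' : IntervalIntegrable g volume 0 (r - c) :=
    (intervalIntegrable_iff_integrableOn_Ioc_of_le (by linarith)).2 hg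
  rw [intervalIntegral.integral_add (intervalIntegrable_integral_mul_comp_sub hcr hu' hg)
      (by simpa using (hg'.comp_sub_right c).mul_const (u c)),
    integral_integral_mul_comp_sub hcr hu' hg, intervalIntegral.integral_mul_const,
    intervalIntegral.integral_comp_sub_right, sub_self, ← intervalIntegral.integral_mul_const,
    ← intervalIntegral.integral_add (intervalIntegrable_integral_comp_sub_mul hcr hu' hg)
      (hg'.mul_const _)]
  refine intervalIntegral.integral_congr fun s hs => ?_
  rw [uIcc_of_le (by linarith)] at hs
  simp only [hu (r - s) ⟨by linarith [hs.2], by linarith [hs.1]⟩]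
  ring

end AbsolutelyContinuous

theorem riemann_liouville_eq_caputo_plus_boundary_general
    (a b : ℝ)
    (nb : Measure ℝ)
    (hint : ∫⁻ s in Set.Ioi (0 : ℝ), ENNReal.ofReal (min s 1) ∂nb ≠ ⊤)
    (nt : ℝ → ℝ)
    (hnt : ∀ s : ℝ, 0 < s → nt s = a + (nb (Set.Ioi s)).toReal)
    (c d : ℝ) (hcd : c ≤ d)
    -- `u` is absolutely continuous on `[c,d]` with derivative `u'`
    (u u' : ℝ → ℝ) (hu'int : IntegrableOn u' (Set.Icc c d))
    (huAC : ∀ x ∈ Set.Icc c d, u x = u c + ∫ y in c..x, u' y) :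
    ∀ᵐ t ∂(volume.restrict (Set.Icc c d)),
      HasDerivAt (fun r => b * u r + ∫ s in (0 : ℝ)..(r - c), u (r - s) * nt s)
        (b * u' t + (∫ s in (0 : ℝ)..(t - c), u' (t - s) * nt s) + nt (t - c) * u c) t := by
  have hnt_int (X : ℝ) : IntegrableOn nt (Ioc 0 X) :=
    (integrableOn_levyTail a nb hint X).congr_fun (fun s hs => (hnt s hs.1).symm) measurableSet_Ioc
  set h : ℝ → ℝ := fun x =>
    b * u' x + ((∫ s in (0 : ℝ)..(x - c), u' (x - s) * nt s) + nt (x - c) * u c)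
  have hh : IntervalIntegrable h volume c d :=
    (((intervalIntegrable_iff_integrableOn_Icc_of_le hcd).2 hu'int).const_mul b).add
      (intervalIntegrable_integral_mul_comp_sub_add hcd hu'int (hnt_int _) (u c))
  have hprim : ∀ r ∈ Icc c d,
      b * u r + ∫ s in (0 : ℝ)..(r - c), u (r - s) * nt s = b * u c + ∫ x in c..r, h x := by
    intro r hr
    have hu'r : IntegrableOn u' (Icc c r) := hu'int.mono_set (Icc_subset_Icc_right hr.2)
    rw [intervalIntegral.integral_add (((intervalIntegrable_iff_integrableOn_Icc_of_le hr.1).2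
        hu'r).const_mul b) (intervalIntegrable_integral_mul_comp_sub_add hr.1 hu'r (hnt_int _) _),
      intervalIntegral.integral_const_mul, ← integral_mul_comp_sub_eq_integral hr.1
        (fun x hx => huAC x ⟨hx.1, hx.2.trans hr.2⟩) hu'r (hnt_int _), huAC r hr]
    ring
  have hIoo : ∀ᵐ t ∂volume.restrict (Icc c d), t ∈ Ioo c d := by
    rw [← Measure.restrict_congr_set Ioo_ae_eq_Icc]
    exact ae_restrict_mem measurableSet_Ioo
  filter_upwards [ae_restrict_of_ae hh.ae_hasDerivAt_integral, hIoo] with t ht htcd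
  rw [add_assoc]
  refine ((ht (uIcc_of_le hcd ▸ Ioo_subset_Icc_self htcd) c left_mem_uIcc).const_add (b * u c))
    |>.congr_of_eventuallyEq ?_
  filter_upwards [Ioo_mem_nhds htcd.1 htcd.2] with r hr using hprim r (Ioo_subset_Icc_self hr)

/-- Let `0 < c ≤ d < ∞`, let `u` be absolutely continuous on `[c,d]`, and
assume the Lévy tail `ν(s) = a + ν̄((s,∞))` is absolutely continuous on `(0,∞)`. Then
`t ↦ b u(t) + ∫₀^{t−c} u(t−s) ν(s) ds` is differentiable almost everywhere on `[c,d]`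
and for almost every `t ∈ [c,d]`,
`(d/dt)[ b u(t) + ∫₀^{t−c} u(t−s) ν(s) ds ]
  = b u′(t) + ∫₀^{t−c} u′(t−s) ν(s) ds + ν(t−c) u(c)`. -/
theorem riemann_liouville_eq_caputo_plus_boundary
    (a b : ℝ) (ha : 0 ≤ a) (hb : 0 ≤ b)
    (nb : Measure ℝ)
    (hint : ∫⁻ s in Set.Ioi (0 : ℝ), ENNReal.ofReal (min s 1) ∂nb ≠ ⊤)
    (nt : ℝ → ℝ)
    (hnt : ∀ s : ℝ, 0 < s → nt s = a + (nb (Set.Ioi s)).toReal)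
    -- `s ↦ ν(s)` is absolutely continuous on `(0,∞)` with derivative `nt'`
    (nt' : ℝ → ℝ)
    (hnt'int : ∀ s1 s2 : ℝ, 0 < s1 → IntegrableOn nt' (Set.Icc s1 s2))
    (hntAC : ∀ s1 s2 : ℝ, 0 < s1 → s1 ≤ s2 → nt s2 = nt s1 + ∫ y in s1..s2, nt' y)
    (c d : ℝ) (hc : 0 < c) (hcd : c ≤ d)
    -- `u` is absolutely continuous on `[c,d]` with derivative `u'`
    (u u' : ℝ → ℝ) (hu'int : IntegrableOn u' (Set.Icc c d))
    (huAC : ∀ x ∈ Set.Icc c d, u x = u c + ∫ y in c..x, u' y) :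
    ∀ᵐ t ∂(volume.restrict (Set.Icc c d)),
      HasDerivAt (fun r => b * u r + ∫ s in (0 : ℝ)..(r - c), u (r - s) * nt s)
        (b * u' t + (∫ s in (0 : ℝ)..(t - c), u' (t - s) * nt s) + nt (t - c) * u c) t :=
  riemann_liouville_eq_caputo_plus_boundary_general a b nb hint nt hnt c d hcd u u' hu'int huAC
end

section
/- Assume f is not identically zero (a + b + ν̄((0,∞)) > 0). Let U : [0,∞) → [0,∞) be nondecreasing and right-continuous with U(0) = 0, subadditive (U(x+y) ≤ U(x) + U(y) for all x, y ≥ 0), and suppose there is a constant c′ > 0 with 1/f(1/x) ≤ c′ U(x) for all x > 0. For t, s > 0 define m_t(s) = ∫_{(0,t]} ( U(t−τ) + U(t+s−τ) ) dU(τ), where dU is the Lebesgue–Stieltjes measure of U. Then for every w > 0 and every t > 0, ∫_w^∞ m_t(s) ds = +∞. -/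
open MeasureTheory Set Real

/-!
Only the crude bound `m_t(s) ≥ U(w) U(t)` for `s > w` is needed: on `(0, t]` the integrand is at
least `U(t + s - τ) ≥ U(w)`, and `dU((0, t]) = U(t)`. Both factors are positive because a
nontrivial Bernstein function is positive on `(0, ∞)`, so `c′ U(x) ≥ 1 / f(1 / x) > 0`.
Integrating a positive constant over `(w, ∞)` gives `+∞`.
-/

noncomputable def bernsteinFun (a b : ℝ) (ν : Measure ℝ) (l : ℝ) : ℝ :=
  a + b * l + ∫ s in Ioi (0 : ℝ), (1 - exp (-(l * s))) ∂ν

noncomputable def correlationMoment (U : StieltjesFunction ℝ) (t s : ℝ) : ℝ :=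
  ∫ τ in Ioc (0 : ℝ) t, (U (t - τ) + U (t + s - τ)) ∂U.measure

lemma one_sub_exp_neg_mul_nonneg {l s : ℝ} (hl : 0 ≤ l) (hs : 0 ≤ s) :
    0 ≤ 1 - exp (-(l * s)) :=
  sub_nonneg.mpr (exp_le_one_iff.mpr (neg_nonpos.mpr (mul_nonneg hl hs)))

lemma one_sub_exp_neg_mul_le {l s : ℝ} (hs : 0 ≤ s) :
    1 - exp (-(l * s)) ≤ max l 1 * min s 1 := by
  rcases le_total s 1 with hs1 | hs1
  · rw [min_eq_left hs1]
    calc 1 - exp (-(l * s)) ≤ l * s := by linarith [add_one_le_exp (-(l * s))]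
      _ ≤ max l 1 * s := mul_le_mul_of_nonneg_right (le_max_left l 1) hs
  · rw [min_eq_right hs1, mul_one]
    linarith [exp_pos (-(l * s)), le_max_right l 1]

lemma integrableOn_one_sub_exp_neg_mul {ν : Measure ℝ}
    (hν : ∫⁻ s in Ioi (0 : ℝ), ENNReal.ofReal (min s 1) ∂ν ≠ ⊤) {l : ℝ} (hl : 0 ≤ l) :
    IntegrableOn (fun s ↦ 1 - exp (-(l * s))) (Ioi 0) ν := by
  have h_nonneg : 0 ≤ᵐ[ν.restrict (Ioi 0)] fun s : ℝ ↦ min s 1 := by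
    filter_upwards [ae_restrict_mem measurableSet_Ioi] with s hs
    exact le_min (le_of_lt hs) zero_le_one
  have h_min : IntegrableOn (fun s : ℝ ↦ min s 1) (Ioi 0) ν :=
    ⟨by fun_prop, (hasFiniteIntegral_iff_ofReal h_nonneg).mpr hν.lt_top⟩
  refine (h_min.const_mul (max l 1)).mono' (by fun_prop) ?_
  filter_upwards [ae_restrict_mem measurableSet_Ioi] with s hs
  rw [norm_of_nonneg (one_sub_exp_neg_mul_nonneg hl (le_of_lt hs))]
  exact one_sub_exp_neg_mul_le (le_of_lt hs)

lemma setIntegral_one_sub_exp_neg_mul_pos {ν : Measure ℝ}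
    (hν : ∫⁻ s in Ioi (0 : ℝ), ENNReal.ofReal (min s 1) ∂ν ≠ ⊤) (hν0 : ν (Ioi 0) ≠ 0)
    {l : ℝ} (hl : 0 < l) :
    0 < ∫ s in Ioi (0 : ℝ), (1 - exp (-(l * s))) ∂ν := by
  have h_nonneg : 0 ≤ᵐ[ν.restrict (Ioi 0)] fun s ↦ 1 - exp (-(l * s)) := by
    filter_upwards [ae_restrict_mem measurableSet_Ioi] with s hs
    exact one_sub_exp_neg_mul_nonneg hl.le (le_of_lt hs)
  rw [setIntegral_pos_iff_support_of_nonneg_ae h_nonneg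
    (integrableOn_one_sub_exp_neg_mul hν hl.le)]
  have h_supp : Ioi (0 : ℝ) ⊆ Function.support fun s ↦ 1 - exp (-(l * s)) := fun s hs ↦
    (sub_pos.mpr (exp_lt_one_iff.mpr (neg_lt_zero.mpr (mul_pos hl hs)))).ne'
  rwa [inter_eq_right.mpr h_supp, pos_iff_ne_zero]

lemma bernsteinFun_pos {a b : ℝ} {ν : Measure ℝ} (ha : 0 ≤ a) (hb : 0 ≤ b)
    (hν : ∫⁻ s in Ioi (0 : ℝ), ENNReal.ofReal (min s 1) ∂ν ≠ ⊤)
    (hnontriv : ¬(a = 0 ∧ b = 0 ∧ ν (Ioi 0) = 0)) {l : ℝ} (hl : 0 < l) :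
    0 < bernsteinFun a b ν l := by
  have h_int : 0 ≤ ∫ s in Ioi (0 : ℝ), (1 - exp (-(l * s))) ∂ν :=
    setIntegral_nonneg measurableSet_Ioi fun s hs ↦ one_sub_exp_neg_mul_nonneg hl.le (le_of_lt hs)
  unfold bernsteinFun
  by_cases hab : a = 0 ∧ b = 0
  · obtain ⟨rfl, rfl⟩ := hab
    simpa using setIntegral_one_sub_exp_neg_mul_pos hν (fun h ↦ hnontriv ⟨rfl, rfl, h⟩) hl
  · rcases not_and_or.mp hab with ha0 | hb0
    · nlinarith [lt_of_le_of_ne ha (Ne.symm ha0)]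
    · nlinarith [lt_of_le_of_ne hb (Ne.symm hb0)]

namespace StieltjesFunction

variable (U : StieltjesFunction ℝ)

lemma nonneg_of_eq_zero_of_nonpos (hU0 : ∀ x ≤ 0, U x = 0) (x : ℝ) : 0 ≤ U x := by
  rcases le_or_gt x 0 with hx | hx
  · exact (hU0 x hx).ge
  · exact hU0 0 le_rfl ▸ U.mono hx.le

lemma measure_Ioc_zero (hU0 : ∀ x ≤ 0, U x = 0) (t : ℝ) :
    U.measure (Ioc 0 t) = ENNReal.ofReal (U t) := by
  rw [U.measure_Ioc, hU0 0 le_rfl, sub_zero]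

lemma mul_le_correlationMoment (hU0 : ∀ x ≤ 0, U x = 0) {w s : ℝ} (hws : w ≤ s) (t : ℝ) :
    U w * U t ≤ correlationMoment U t s := by
  have h_fin : U.measure (Ioc 0 t) < ⊤ := by
    rw [U.measure_Ioc_zero hU0]; exact ENNReal.ofReal_lt_top
  have h_anti : Antitone fun τ ↦ U (t - τ) + U (t + s - τ) := fun τ₁ τ₂ h ↦
    add_le_add (U.mono (by linarith)) (U.mono (by linarith))
  calc U w * U t = ∫ _τ in Ioc (0 : ℝ) t, U w ∂U.measure := by
        rw [setIntegral_const, measureReal_def, U.measure_Ioc_zero hU0,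
          ENNReal.toReal_ofReal (U.nonneg_of_eq_zero_of_nonpos hU0 t), smul_eq_mul, mul_comm]
    _ ≤ correlationMoment U t s := by
        refine setIntegral_mono_on (integrableOn_const h_fin.ne)
          ((h_anti.locallyIntegrable.integrableOn_isCompact isCompact_Icc).mono_set
            Ioc_subset_Icc_self) measurableSet_Ioc fun τ hτ ↦ ?_
        have h_shift : U w ≤ U (t + s - τ) := U.mono (by linarith [hτ.2])
        linarith [U.nonneg_of_eq_zero_of_nonpos hU0 (t - τ)]

end StieltjesFunction

lemma lintegral_Ioi_ofReal_eq_top_of_le {g : ℝ → ℝ} {c w : ℝ} (hc : 0 < c)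
    (hg : ∀ s > w, c ≤ g s) : ∫⁻ s in Ioi w, ENNReal.ofReal (g s) = ⊤ := by
  have h_le : ∫⁻ _s in Ioi w, ENNReal.ofReal c ≤ ∫⁻ s in Ioi w, ENNReal.ofReal (g s) :=
    setLIntegral_mono_ae' measurableSet_Ioi
      (Filter.Eventually.of_forall fun s hs ↦ ENNReal.ofReal_le_ofReal (hg s hs))
  rwa [setLIntegral_const, volume_Ioi, ENNReal.mul_top (ENNReal.ofReal_pos.mpr hc).ne',
    top_le_iff] at h_le

theorem long_range_dependence_inverse_subordinator_general
    (a b : ℝ) (ha : 0 ≤ a) (hb : 0 ≤ b)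
    (nb : Measure ℝ)
    (hint : ∫⁻ s in Set.Ioi (0 : ℝ), ENNReal.ofReal (min s 1) ∂nb ≠ ⊤)
    (f : ℝ → ℝ)
    (hf : ∀ l : ℝ, 0 < l →
      f l = a + b * l + ∫ s in Set.Ioi (0 : ℝ), (1 - Real.exp (-(l * s))) ∂nb)
    -- `f` is not identically zero
    (hnontriv : ¬(a = 0 ∧ b = 0 ∧ nb (Set.Ioi (0 : ℝ)) = 0))
    -- the renewal function `U`, nondecreasing and right continuous
    (U : StieltjesFunction ℝ) (hU0 : ∀ x : ℝ, x ≤ 0 → U x = 0)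
    (c' : ℝ) (hUf : ∀ x : ℝ, 0 < x → 1 / f (1 / x) ≤ c' * U x)
    (m : ℝ → ℝ → ℝ)
    (hm : ∀ t s : ℝ, 0 < t → 0 < s →
      m t s = ∫ τ in Set.Ioc (0 : ℝ) t, (U (t - τ) + U (t + s - τ)) ∂U.measure) :
    ∀ w t : ℝ, 0 < w → 0 < t →
      ∫⁻ s in Set.Ioi w, ENNReal.ofReal (m t s) = ⊤ := by
  intro w t hw ht
  have hU_pos : ∀ x, 0 < x → 0 < U x := fun x hx ↦ by
    have hf_pos : 0 < f (1 / x) :=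
      hf (1 / x) (by positivity) ▸ bernsteinFun_pos ha hb hint hnontriv (by positivity)
    have h_prod : 0 < c' * U x := (one_div_pos.mpr hf_pos).trans_le (hUf x hx)
    exact (U.nonneg_of_eq_zero_of_nonpos hU0 x).lt_of_ne fun h0 ↦ by simp [← h0] at h_prod
  refine lintegral_Ioi_ofReal_eq_top_of_le (mul_pos (hU_pos w hw) (hU_pos t ht)) fun s hs ↦ ?_
  rw [hm t s ht (hw.trans hs)]
  exact U.mul_le_correlationMoment hU0 hs.le t

/-- long-range dependence of the inverse subordinator. Let `U` be the
renewal function of the subordinator with (non-trivial) Laplace exponent `f`: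
nondecreasing, right-continuous, `U(0) = 0`, vanishing on the negative half-line,
subadditive, and with `1/f(1/x) ≤ c′ U(x)` for `x > 0`. With
`m_t(s) = ∫_{(0,t]} (U(t−τ) + U(t+s−τ)) dU(τ)` (the correlation moment
`E[L(t)L(t+s)]` of the inverse subordinator), for every `w > 0` and `t > 0` one has
`∫_w^∞ m_t(s) ds = +∞`. -/
theorem long_range_dependence_inverse_subordinator
    (a b : ℝ) (ha : 0 ≤ a) (hb : 0 ≤ b)
    (nb : Measure ℝ)
    (hint : ∫⁻ s in Set.Ioi (0 : ℝ), ENNReal.ofReal (min s 1) ∂nb ≠ ⊤)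
    (f nt : ℝ → ℝ)
    (hf : ∀ l : ℝ, 0 < l →
      f l = a + b * l + ∫ s in Set.Ioi (0 : ℝ), (1 - Real.exp (-(l * s))) ∂nb)
    (hnt : ∀ s : ℝ, 0 < s → nt s = a + (nb (Set.Ioi s)).toReal)
    -- `f` is not identically zero
    (hnontriv : ¬(a = 0 ∧ b = 0 ∧ nb (Set.Ioi (0 : ℝ)) = 0))
    -- the renewal function `U`, nondecreasing and right continuous
    (U : StieltjesFunction ℝ) (hU0 : ∀ x : ℝ, x ≤ 0 → U x = 0)
    (hUsub : ∀ x y : ℝ, 0 ≤ x → 0 ≤ y → U (x + y) ≤ U x + U y)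
    (c' : ℝ) (hc' : 0 < c') (hUf : ∀ x : ℝ, 0 < x → 1 / f (1 / x) ≤ c' * U x)
    (m : ℝ → ℝ → ℝ)
    (hm : ∀ t s : ℝ, 0 < t → 0 < s →
      m t s = ∫ τ in Set.Ioc (0 : ℝ) t, (U (t - τ) + U (t + s - τ)) ∂U.measure) :
    ∀ w t : ℝ, 0 < w → 0 < t →
      ∫⁻ s in Set.Ioi w, ENNReal.ofReal (m t s) = ⊤ :=
  long_range_dependence_inverse_subordinator_general a b ha hb nb hint f hf hnontriv U hU0 c' hUf m
    hm
end
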